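/- arXiv:2401.07821 — 7 statements merged into one kernel-verified Lean document; each statement's English description precedes it below -/
import Mathlib

section
/- Every group homomorphism Φ : G_α → G_β satisfies at least one of the following: (i) Φ(ℤ^m) ⊆ ℤ^{m'} (Φ is of type I), or (ii) there exists v ∈ F_{n'} such that π'(Φ(g)) ∈ ⟨v⟩ for every g ∈ G_α, i.e. the projection to F_{n'} of the image of Φ is a cyclic subgroup of F_{n'}. -/
open Matrix SemidirectProduct

/-- The free abelian group `ℤ^m`, written multiplicatively. -/
abbrev FA (m : ℕ) : Type := Multiplicative (Fin m → ℤ)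

/-- The (right) action of `GL_m(ℤ)` on `ℤ^m` (row vectors), as a homomorphism into
`MulAut (ℤ^m)`: the automorphism attached to `M` sends `a` to `a · M⁻¹`, so that in the
semidirect product below one gets the relation `u⁻¹ tᵃ u = t^(a·A_u)`. -/
def rowAction (m : ℕ) :
    Matrix.GeneralLinearGroup (Fin m) ℤ →* MulAut (FA m) where
  toFun M :=
  { toFun := fun a => Multiplicative.ofAdd
      (Matrix.vecMul (Multiplicative.toAdd a)
        ((↑(M⁻¹) : Matrix (Fin m) (Fin m) ℤ)))
    invFun := fun a => Multiplicative.ofAdd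
      (Matrix.vecMul (Multiplicative.toAdd a) ((↑M : Matrix (Fin m) (Fin m) ℤ)))
    left_inv := by
      intro a
      simp [Matrix.vecMul_vecMul]
    right_inv := by
      intro a
      simp [Matrix.vecMul_vecMul]
    map_mul' := by
      intro a b
      simp [Matrix.add_vecMul] }
  map_one' := by
    ext a
    simp
  map_mul' := by
    intro M N
    ext a
    simp [Matrix.vecMul_vecMul, _root_.mul_inv_rev]

/-- The free-abelian by free group `G_α = F_n ⋉_α ℤ^m` associated to
`α : F_n → GL_m(ℤ)`; it satisfies `u⁻¹ tᵃ u = t^(a·A_u)`. -/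
abbrev Gsd {n m : ℕ} (α : FreeGroup (Fin n) →* Matrix.GeneralLinearGroup (Fin m) ℤ) :
    Type :=
  FA m ⋊[(rowAction m).comp α] FreeGroup (Fin n)

/-- `tA α a` is the element `tᵃ` of the abelian part of `G_α`. -/
def tA {n m : ℕ} (α : FreeGroup (Fin n) →* Matrix.GeneralLinearGroup (Fin m) ℤ)
    (a : Fin m → ℤ) : Gsd α :=
  SemidirectProduct.inl (Multiplicative.ofAdd a)

/-- `fE α u` is the element `u` of the free part of `G_α`. -/
def fE {n m : ℕ} (α : FreeGroup (Fin n) →* Matrix.GeneralLinearGroup (Fin m) ℤ)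
    (u : FreeGroup (Fin n)) : Gsd α :=
  SemidirectProduct.inr u

/-- The projection `τ : G_α → ℤ^m`, reading off the abelian part of the normal form
`g = u · tᵃ` (i.e. `τ (fE α u * tA α a) = a`). -/
def tau {n m : ℕ} (α : FreeGroup (Fin n) →* Matrix.GeneralLinearGroup (Fin m) ℤ)
    (g : Gsd α) : Fin m → ℤ :=
  Matrix.vecMul (Multiplicative.toAdd (SemidirectProduct.left g))
    ((↑(α (SemidirectProduct.right g)) : Matrix (Fin m) (Fin m) ℤ))

/-!
If `Φ(ℤ^m) ⊄ ℤ^{m'}`, some `tᵃ` has `w := π'(Φ(tᵃ)) ≠ 1`. As `ℤ^m` is abelian and normal, all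
conjugates of `tᵃ` commute with `tᵃ`, so all `K`-conjugates of `w` commute with `w`, where
`K := π'(Φ(G_α)) ≤ F_{n'}`. By Nielsen–Schreier the centralizer of `w` is a free group with
nontrivial centre, hence cyclic, say `⟨r⟩`: abelian free groups are cyclic (two distinct generators
have noncommuting images in `S₃`), so a central element generates, together with any generator `x`,
a cyclic group, and is therefore a power of `x` (exponent sums show `x` is not a proper power);
two distinct generators would force it to be `1`. Every `k ∈ K` conjugates `r` to `r^{±1}`, and
torsion-freeness excludes `r ↦ r⁻¹` (`k²` would centralize `r`, forcing `k² = 1`), so `K ≤ ⟨r⟩`.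
-/

namespace FreeGroup
variable {α : Type*}

theorem not_commute_of_ne {a b : α} (hab : a ≠ b) : ¬Commute (of a) (of b) := by
  have hσ : ¬Commute (Equiv.swap (0 : Fin 3) 1) (Equiv.swap 1 2) := by
    unfold Commute SemiconjBy; decide
  classical
  intro h
  apply hσ
  simpa [hab.symm] using h.map (lift fun s => if s = a then Equiv.swap 0 1 else Equiv.swap 1 2)

def exponentSum [DecidableEq α] (a : α) : FreeGroup α →* Multiplicative ℤ :=
  lift (Pi.mulSingle a (Multiplicative.ofAdd 1))

@[simp]
theorem exponentSum_of_self [DecidableEq α] (a : α) :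
    exponentSum a (of a) = Multiplicative.ofAdd 1 := by
  simp [exponentSum]

@[simp]
theorem exponentSum_of_of_ne [DecidableEq α] {a b : α} (h : b ≠ a) :
    exponentSum a (of b) = 1 := by
  simp [exponentSum, h]

theorem isCyclic_of_subsingleton [Subsingleton α] : IsCyclic (FreeGroup α) := by
  obtain ⟨g, hg⟩ : ∃ g : FreeGroup α, Set.range of ⊆ {g} := by
    rcases isEmpty_or_nonempty α with hα | ⟨⟨a⟩⟩
    · exact ⟨1, by simp [Set.range_eq_empty]⟩
    · exact ⟨of a, by rintro _ ⟨b, rfl⟩; rw [Subsingleton.elim b a]; rfl⟩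
  refine isCyclic_iff_exists_zpowers_eq_top.2 ⟨g, eq_top_iff.2 ?_⟩
  rw [← closure_range_of, Subgroup.zpowers_eq_closure]
  exact Subgroup.closure_mono hg

theorem isCyclic_of_isMulCommutative [IsMulCommutative (FreeGroup α)] :
    IsCyclic (FreeGroup α) := by
  have : Subsingleton α :=
    ⟨fun a b => by_contra fun hab => not_commute_of_ne hab (Std.Commutative.comm _ _)⟩
  exact isCyclic_of_subsingleton

end FreeGroup

namespace IsFreeGroup
variable {G : Type*} [Group G] [IsFreeGroup G]

theorem isCyclic_of_isMulCommutative [IsMulCommutative G] : IsCyclic G := by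
  have : IsMulCommutative (FreeGroup (Generators G)) :=
    ⟨⟨fun x y => (toFreeGroup G).symm.injective (by simp [Std.Commutative.comm])⟩⟩
  have := FreeGroup.isCyclic_of_isMulCommutative (α := Generators G)
  exact isCyclic_of_surjective (toFreeGroup G).symm (toFreeGroup G).symm.surjective

theorem exists_mem_zpowers_of_commute {x y : G} (h : Commute x y) :
    ∃ r : G, x ∈ Subgroup.zpowers r ∧ y ∈ Subgroup.zpowers r := by
  let H := Subgroup.closure {x, y}
  have : IsMulCommutative H := Subgroup.isMulCommutative_closure (by
    simp only [Set.mem_insert_iff, Set.mem_singleton_iff]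
    rintro _ (rfl | rfl) _ (rfl | rfl) <;> first | rfl | exact h.eq | exact h.eq.symm)
  obtain ⟨r, hr⟩ := (Subgroup.isCyclic_iff_exists_zpowers_eq_top H).1 isCyclic_of_isMulCommutative
  exact ⟨r, hr ▸ Subgroup.subset_closure (by simp), hr ▸ Subgroup.subset_closure (by simp)⟩

end IsFreeGroup

namespace FreeGroup
variable {α : Type*}

theorem mem_zpowers_of_of_commute {a : α} {c : FreeGroup α} (h : Commute (of a) c) :
    c ∈ Subgroup.zpowers (of a) := by
  classical
  obtain ⟨r, ⟨j, hj⟩, hc⟩ := IsFreeGroup.exists_mem_zpowers_of_commute h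
  have hunit : j * Multiplicative.toAdd (exponentSum a r) = 1 := by
    simpa [mul_comm] using congrArg (Multiplicative.toAdd ∘ exponentSum a) hj
  rcases Int.eq_one_or_neg_one_of_mul_eq_one' hunit with ⟨rfl, -⟩ | ⟨rfl, -⟩
  · simpa [← hj] using hc
  · simpa [← hj] using hc

theorem isCyclic_of_commute_of_ne_one {z : FreeGroup α} (hz1 : z ≠ 1)
    (hz : ∀ g, Commute g z) : IsCyclic (FreeGroup α) := by
  classical
  have : Subsingleton α := ⟨fun a b => by_contra fun hab => by
    obtain ⟨k, rfl⟩ := Subgroup.mem_zpowers_iff.1 (mem_zpowers_of_of_commute (hz (of a)))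
    obtain ⟨l, hl⟩ := Subgroup.mem_zpowers_iff.1 (mem_zpowers_of_of_commute (hz (of b)))
    have hk : k = 0 := by
      simpa [Ne.symm hab] using congrArg (Multiplicative.toAdd ∘ exponentSum a) hl.symm
    simp [hk] at hz1⟩
  exact isCyclic_of_subsingleton

end FreeGroup

namespace IsFreeGroup
variable {G : Type*} [Group G] [IsFreeGroup G]

theorem isCyclic_of_commute_of_ne_one {z : G} (hz1 : z ≠ 1) (hz : ∀ g, Commute g z) :
    IsCyclic G := by
  let e := toFreeGroup G
  have := FreeGroup.isCyclic_of_commute_of_ne_one (z := e z) (by simpa using hz1)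
    (fun g => by simpa using (hz (e.symm g)).map e)
  exact isCyclic_of_surjective e.symm e.symm.surjective

theorem exists_centralizer_eq_zpowers {z : G} (hz : z ≠ 1) :
    ∃ r : G, Subgroup.centralizer {z} = Subgroup.zpowers r := by
  let C := Subgroup.centralizer {z}
  have hzC : z ∈ C := Subgroup.mem_centralizer_singleton_iff.2 rfl
  have : IsCyclic C := isCyclic_of_commute_of_ne_one (z := ⟨z, hzC⟩)
    (by simpa [Subtype.ext_iff] using hz)
    (fun g => Subtype.ext (Subgroup.mem_centralizer_singleton_iff.1 g.2))
  obtain ⟨r, hr⟩ := (Subgroup.isCyclic_iff_exists_zpowers_eq_top C).1 this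
  exact ⟨r, hr.symm⟩

end IsFreeGroup

section TorsionFree
variable {G : Type*} [Group G] [IsMulTorsionFree G]

theorem conj_eq_self_or_inv_of_conj_mem_zpowers {r k : G} (hr : r ≠ 1)
    (h₁ : k * r * k⁻¹ ∈ Subgroup.zpowers r) (h₂ : k⁻¹ * r * k ∈ Subgroup.zpowers r) :
    k * r * k⁻¹ = r ∨ k * r * k⁻¹ = r⁻¹ := by
  obtain ⟨a, ha⟩ := Subgroup.mem_zpowers_iff.1 h₁
  obtain ⟨b, hb⟩ := Subgroup.mem_zpowers_iff.1 h₂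
  have hba : r ^ (b * a) = r := by
    calc r ^ (b * a) = (k⁻¹ * r * k) ^ a := by rw [_root_.zpow_mul, hb]
      _ = k⁻¹ * r ^ a * k := by simpa using conj_zpow (a := k⁻¹) (b := r) (i := a)
      _ = r := by rw [ha]; group
  have hab : b * a = 1 := by
    rw [← sub_eq_zero, ← IsMulTorsionFree.zpow_eq_one_iff_right hr, _root_.zpow_sub, hba,
      zpow_one, mul_inv_cancel]
  rcases Int.eq_one_or_neg_one_of_mul_eq_one' hab with ⟨-, rfl⟩ | ⟨-, rfl⟩
  · simp [← ha]
  · simp [← ha]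

theorem eq_one_of_conj_eq_inv {r k : G} (hcent : ∀ x, Commute x r → x ∈ Subgroup.zpowers r)
    (h : k * r * k⁻¹ = r⁻¹) : r = 1 := by
  by_contra hr
  have hk2 : Commute (k ^ 2) r := by
    calc k ^ 2 * r = k * (k * r * k⁻¹) * k⁻¹ * k ^ 2 := by rw [sq]; group
      _ = k * r⁻¹ * k⁻¹ * k ^ 2 := by rw [h]
      _ = (k * r * k⁻¹)⁻¹ * k ^ 2 := by group
      _ = r * k ^ 2 := by rw [h, inv_inv]
  obtain ⟨t, ht⟩ := Subgroup.mem_zpowers_iff.1 (hcent _ hk2)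
  have hinv : r ^ t = r ^ (-t) := by
    calc r ^ t = k * r ^ t * k⁻¹ := by rw [ht]; group
      _ = r ^ (-t) := by rw [← conj_zpow, h, _root_.inv_zpow, _root_.zpow_neg]
  have ht0 : t = 0 := by
    have : r ^ (t + t) = 1 := by rw [_root_.zpow_add]; nth_rw 1 [hinv]; group
    have := (IsMulTorsionFree.zpow_eq_one_iff_right hr).1 this
    omega
  have hk : k = 1 := by
    rwa [ht0, zpow_zero, eq_comm, sq_eq_one] at ht
  rw [hk, one_mul, inv_one, mul_one, self_eq_inv] at h
  exact hr h

end TorsionFree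

namespace FreeGroup
variable {α : Type*}

theorem exists_le_zpowers_of_commute_conj {K : Subgroup (FreeGroup α)} {w : FreeGroup α}
    (hw : w ≠ 1) (hK : ∀ k ∈ K, Commute (k * w * k⁻¹) w) :
    ∃ v : FreeGroup α, K ≤ Subgroup.zpowers v := by
  obtain ⟨r, hr⟩ := IsFreeGroup.exists_centralizer_eq_zpowers hw
  have hmem : ∀ x, Commute x w → x ∈ Subgroup.zpowers r := fun x hx =>
    hr ▸ Subgroup.mem_centralizer_singleton_iff.2 hx.eq
  obtain ⟨s, rfl⟩ := Subgroup.mem_zpowers_iff.1 (hmem w (Commute.refl w))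
  have hr1 : r ≠ 1 := by rintro rfl; simp at hw
  have hconj : ∀ k ∈ K, k⁻¹ * r * k ∈ Subgroup.zpowers r := by
    intro k hk
    obtain ⟨q, hq⟩ := Subgroup.mem_zpowers_iff.1 (hmem _ (hK k hk))
    have hcomm : Commute r (k * r ^ s * k⁻¹) := by
      rw [← hq]; exact (Commute.refl r).zpow_right q
    exact hmem _ (by simpa [mul_assoc] using hcomm.map (MulAut.conj k⁻¹))
  refine ⟨r, fun k hk => ?_⟩
  rcases conj_eq_self_or_inv_of_conj_mem_zpowers hr1 (by simpa using hconj k⁻¹ (inv_mem hk))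
    (hconj k hk) with h | h
  · exact hmem k ((show Commute k r from mul_inv_eq_iff_eq_mul.1 h).zpow_right s)
  · exact absurd (eq_one_of_conj_eq_inv (fun x hx => hmem x (hx.zpow_right s)) h) hr1

end FreeGroup

theorem SemidirectProduct.commute_conj_inl {N G : Type*} [CommGroup N] [Group G]
    {φ : G →* MulAut N} (g : N ⋊[φ] G) (n : N) : Commute (g * inl n * g⁻¹) (inl n) := by
  obtain ⟨c, hc⟩ : g * inl n * g⁻¹ ∈ (inl : N →* N ⋊[φ] G).range := by
    rw [range_inl_eq_ker_rightHom]; simp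
  rw [← hc]
  exact (Commute.all c n).map inl

theorem typeI_or_typeII_general {n m n' m' : ℕ}
    (α : FreeGroup (Fin n) →* Matrix.GeneralLinearGroup (Fin m) ℤ)
    (β : FreeGroup (Fin n') →* Matrix.GeneralLinearGroup (Fin m') ℤ)
    (Φ : Gsd α →* Gsd β) :
    (∀ a : Fin m → ℤ, ∃ b : Fin m' → ℤ, Φ (tA α a) = tA β b) ∨
      (∃ v : FreeGroup (Fin n'), ∀ g : Gsd α,
        SemidirectProduct.rightHom (Φ g) ∈ Subgroup.zpowers v) := by
  by_cases hI : ∀ a, SemidirectProduct.rightHom (Φ (tA α a)) = 1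
  · left
    intro a
    obtain ⟨b, hb⟩ : Φ (tA α a) ∈ (SemidirectProduct.inl : FA m' →* Gsd β).range := by
      rw [range_inl_eq_ker_rightHom]; exact hI a
    exact ⟨Multiplicative.toAdd b, hb.symm⟩
  · right
    push Not at hI
    obtain ⟨a, ha⟩ := hI
    let f := (SemidirectProduct.rightHom : Gsd β →* _).comp Φ
    obtain ⟨v, hv⟩ := FreeGroup.exists_le_zpowers_of_commute_conj (K := f.range)
      ha (by
        rintro _ ⟨g, rfl⟩
        simpa [f, tA] using (SemidirectProduct.commute_conj_inl g _).map f)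
    exact ⟨v, fun g => hv ⟨g, rfl⟩⟩

/-- Every homomorphism `Φ : G_α → G_β` is of type I (`Φ(ℤ^m) ⊆ ℤ^{m'}`) or else the
projection to `F_{n'}` of its image is contained in a cyclic subgroup. -/
theorem typeI_or_typeII {n m n' m' : ℕ} (hn : 2 ≤ n) (hm : 1 ≤ m)
    (hn' : 2 ≤ n') (hm' : 1 ≤ m')
    (α : FreeGroup (Fin n) →* Matrix.GeneralLinearGroup (Fin m) ℤ)
    (β : FreeGroup (Fin n') →* Matrix.GeneralLinearGroup (Fin m') ℤ)
    (Φ : Gsd α →* Gsd β) :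
    (∀ a : Fin m → ℤ, ∃ b : Fin m' → ℤ, Φ (tA α a) = tA β b) ∨
      (∃ v : FreeGroup (Fin n'), ∀ g : Gsd α,
        SemidirectProduct.rightHom (Φ g) ∈ Subgroup.zpowers v) :=
  typeI_or_typeII_general α β Φ
end

section
/- Let Φ be a type I endomorphism of G_α, with associated matrix Q, homomorphism φ and map β_Φ. Then for every integer k > 0, every u ∈ F_n and every a ∈ ℤ^m, Φ^k(u·t^a) = φ^k(u) · t^{c}, where c = a·Q^k + Σ_{i=0}^{k-1} β_Φ(φ^i(u))·Q^{k-1-i}. -/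
open Matrix SemidirectProduct

/-
In normal form `Φ(u) = φ(u)·t^{β_Φ(u)}`, so `Φ(u·tᵃ) = φ(u)·t^{β_Φ(u)}·t^{a·Q}
= φ(u)·t^{a·Q + β_Φ(u)}`. Hence applying `Φ` to `φ^k(u)·t^c` changes the exponent by the
affine map `c ↦ c·Q + β_Φ(φ^k(u))`, and the closed form is what `k` iterations of these
maps produce.
-/

lemma vecMul_pow_add_sum_vecMul_pow_succ {ι R : Type*} [Fintype ι] [DecidableEq ι]
    [Semiring R] (Q : Matrix ι ι R) (a : ι → R) (b : ℕ → ι → R) (k : ℕ) :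
    (a ᵥ* Q ^ k + ∑ i ∈ Finset.range k, b i ᵥ* Q ^ (k - 1 - i)) ᵥ* Q + b k
      = a ᵥ* Q ^ (k + 1) + ∑ i ∈ Finset.range (k + 1), b i ᵥ* Q ^ (k + 1 - 1 - i) := by
  have hshift : ∀ i ∈ Finset.range k, b i ᵥ* Q ^ (k - 1 - i) ᵥ* Q = b i ᵥ* Q ^ (k - i) := by
    intro i _
    rw [vecMul_vecMul, ← pow_succ, show k - 1 - i + 1 = k - i by grind]
  rw [Nat.add_sub_cancel, add_vecMul, vecMul_vecMul, ← pow_succ, sum_vecMul,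
    Finset.sum_congr rfl hshift, Finset.sum_range_succ, Nat.sub_self, pow_zero, vecMul_one,
    add_assoc]

lemma Monoid.End.pow_succ_apply' {M : Type*} [Monoid M] (f : Monoid.End M) (k : ℕ) (x : M) :
    (f ^ (k + 1)) x = f ((f ^ k) x) :=
  Function.iterate_succ_apply' f k x

section

variable {n m : ℕ} {α : FreeGroup (Fin n) →* Matrix.GeneralLinearGroup (Fin m) ℤ}

lemma tA_add (a b : Fin m → ℤ) : tA α (a + b) = tA α a * tA α b :=
  map_mul inl (Multiplicative.ofAdd a) (Multiplicative.ofAdd b)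

lemma fE_right_mul_tA_tau (g : Gsd α) : fE α g.right * tA α (tau α g) = g := by
  ext : 1
  · change 1 * ((rowAction m).comp α) g.right (Multiplicative.ofAdd (tau α g)) = g.left
    simp [rowAction, tau, vecMul_vecMul]
  · simp [fE, tA]

variable {Φ : Monoid.End (Gsd α)} {Q : Matrix (Fin m) (Fin m) ℤ}
  {φ : Monoid.End (FreeGroup (Fin n))}

lemma map_fE_eq (hφ : ∀ u : FreeGroup (Fin n), rightHom (Φ (fE α u)) = φ u)
    (u : FreeGroup (Fin n)) : Φ (fE α u) = fE α (φ u) * tA α (tau α (Φ (fE α u))) := by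
  rw [← hφ u]
  exact (fE_right_mul_tA_tau _).symm

lemma map_fE_mul_tA (hQ : ∀ a : Fin m → ℤ, Φ (tA α a) = tA α (a ᵥ* Q))
    (hφ : ∀ u : FreeGroup (Fin n), rightHom (Φ (fE α u)) = φ u)
    (u : FreeGroup (Fin n)) (a : Fin m → ℤ) :
    Φ (fE α u * tA α a) = fE α (φ u) * tA α (a ᵥ* Q + tau α (Φ (fE α u))) := by
  calc Φ (fE α u * tA α a) = fE α (φ u) * tA α (tau α (Φ (fE α u))) * tA α (a ᵥ* Q) := by
        rw [map_mul, hQ, ← map_fE_eq hφ]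
    _ = _ := by rw [mul_assoc, ← tA_add, add_comm]

end

theorem typeI_power_formula_general {n m : ℕ}
    (α : FreeGroup (Fin n) →* Matrix.GeneralLinearGroup (Fin m) ℤ)
    (Φ : Monoid.End (Gsd α)) (Q : Matrix (Fin m) (Fin m) ℤ)
    (hQ : ∀ a : Fin m → ℤ, Φ (tA α a) = tA α (Matrix.vecMul a Q))
    (φ : Monoid.End (FreeGroup (Fin n)))
    (hφ : ∀ u : FreeGroup (Fin n), SemidirectProduct.rightHom (Φ (fE α u)) = φ u)
    (k : ℕ) (u : FreeGroup (Fin n)) (a : Fin m → ℤ) :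
    (Φ ^ k) (fE α u * tA α a)
      = fE α ((φ ^ k) u)
          * tA α (Matrix.vecMul a (Q ^ k)
              + ∑ i ∈ Finset.range k,
                  Matrix.vecMul (tau α (Φ (fE α ((φ ^ i) u)))) (Q ^ (k - 1 - i))) := by
  induction k with
  | zero => simp
  | succ k ih =>
    rw [Monoid.End.pow_succ_apply', ih, map_fE_mul_tA hQ hφ, Monoid.End.pow_succ_apply',
      vecMul_pow_add_sum_vecMul_pow_succ Q a (fun i => tau α (Φ (fE α ((φ ^ i) u))))]

/-- Powers of a type I endomorphism:
`Φ^k(u·tᵃ) = φ^k(u) · t^(a·Q^k + ∑_{i<k} β_Φ(φ^i(u))·Q^(k-1-i))`. -/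
theorem typeI_power_formula {n m : ℕ} (hn : 2 ≤ n) (hm : 1 ≤ m)
    (α : FreeGroup (Fin n) →* Matrix.GeneralLinearGroup (Fin m) ℤ)
    (Φ : Monoid.End (Gsd α)) (Q : Matrix (Fin m) (Fin m) ℤ)
    (hQ : ∀ a : Fin m → ℤ, Φ (tA α a) = tA α (Matrix.vecMul a Q))
    (φ : Monoid.End (FreeGroup (Fin n)))
    (hφ : ∀ u : FreeGroup (Fin n), SemidirectProduct.rightHom (Φ (fE α u)) = φ u)
    (k : ℕ) (hk : 0 < k) (u : FreeGroup (Fin n)) (a : Fin m → ℤ) :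
    (Φ ^ k) (fE α u * tA α a)
      = fE α ((φ ^ k) u)
          * tA α (Matrix.vecMul a (Q ^ k)
              + ∑ i ∈ Finset.range k,
                  Matrix.vecMul (tau α (Φ (fE α ((φ ^ i) u)))) (Q ^ (k - 1 - i))) :=
  typeI_power_formula_general α Φ Q hQ φ hφ k u a
end

section
/- The group G_α is not coHopfian: there exists an injective group endomorphism of G_α that is not surjective. -/
open Matrix SemidirectProduct

/-!
Squaring `a ↦ a²` on `ℤ^m` commutes with every automorphism of `ℤ^m`, so together with the
identity of `F_n` it defines an endomorphism of `G_α = F_n ⋉_α ℤ^m`. It is injective because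
`ℤ^m` is torsion-free, and not surjective because `t^{e₁}` has no square root in `ℤ^m`.
-/

open Function

namespace SemidirectProduct

variable {N₁ G₁ N₂ G₂ : Type*} [Group N₁] [Group G₁] [Group N₂] [Group G₂]
  {φ₁ : G₁ →* MulAut N₁} {φ₂ : G₂ →* MulAut N₂} {fn : N₁ →* N₂} {fg : G₁ →* G₂}
  {h : ∀ g : G₁, fn.comp (φ₁ g).toMonoidHom = (φ₂ (fg g)).toMonoidHom.comp fn}

theorem map_injective (hn : Injective fn) (hg : Injective fg) : Injective (map fn fg h) :=
  fun _ _ hxy => SemidirectProduct.ext (hn congr(($hxy).left)) (hg congr(($hxy).right))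

theorem surjective_of_surjective_map (hs : Surjective (map fn fg h)) : Surjective fn := fun y =>
  let ⟨x, hx⟩ := hs (inl y)
  ⟨x.left, by simpa using congr(($hx).left)⟩

end SemidirectProduct

theorem MonoidHom.comp_zpowGroupHom {A B : Type*} [CommGroup A] [CommGroup B] (f : A →* B)
    (k : ℤ) : f.comp (zpowGroupHom k) = (zpowGroupHom k).comp f := by
  ext
  simp

theorem not_surjective_zpow_of_not_isUnit {ι : Type*} [Nonempty ι] {k : ℤ} (hk : ¬IsUnit k) :
    ¬Surjective fun a : Multiplicative (ι → ℤ) => a ^ k := by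
  intro hs
  obtain ⟨a, ha⟩ := hs (Multiplicative.ofAdd 1)
  have hka : k * a.toAdd (Classical.arbitrary ι) = 1 := by
    simpa using congr(Multiplicative.toAdd $ha (Classical.arbitrary ι))
  exact hk (.of_mul_eq_one _ hka)

theorem Gsd_not_cohopfian_general {n m : ℕ} (hm : 1 ≤ m)
    (α : FreeGroup (Fin n) →* Matrix.GeneralLinearGroup (Fin m) ℤ) :
    ∃ Φ : Gsd α →* Gsd α, Function.Injective Φ ∧ ¬ Function.Surjective Φ := by
  have : Nonempty (Fin m) := ⟨⟨0, hm⟩⟩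
  refine ⟨map (zpowGroupHom 2) (MonoidHom.id _)
    (fun _ => (MonoidHom.comp_zpowGroupHom _ 2).symm), ?_, ?_⟩
  · exact map_injective (zpow_left_injective two_ne_zero) injective_id
  · exact fun hs => not_surjective_zpow_of_not_isUnit (by decide) (surjective_of_surjective_map hs)

/-- `G_α` is not coHopfian: it has an injective, non-surjective endomorphism. -/
theorem Gsd_not_cohopfian {n m : ℕ} (hn : 2 ≤ n) (hm : 1 ≤ m)
    (α : FreeGroup (Fin n) →* Matrix.GeneralLinearGroup (Fin m) ℤ) :
    ∃ Φ : Gsd α →* Gsd α, Function.Injective Φ ∧ ¬ Function.Surjective Φ :=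
  Gsd_not_cohopfian_general hm α
end

section
/- If the groups G_α = F_n ⋉_α ℤ^m and G_β = F_{n'} ⋉_β ℤ^{m'} are isomorphic, then n = n' and m = m'. -/
open Matrix SemidirectProduct

/-!
The abelian factor `ℤ^m` of `F_n ⋉ ℤ^m` is the kernel of the projection onto `F_n`, and for
`n ≥ 2` this kernel is intrinsic: it consists exactly of the elements that commute with all of
their conjugates. Indeed, a nontrivial `w ∈ F_n` fails to commute with some conjugate
`z = v w v⁻¹`: if the first and last letters of `w` involve the same generator, take for `v` any
other generator, and otherwise take for `v` the last letter of `w`. Then the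
reduced words of `w` and `z` concatenate to a reduced word but start with different letters; if
`w z = z w`, the reduced word of `z w` would be a sublist of `z.toWord ++ w.toWord` of full
length, forcing the two words to commute as lists.
An isomorphism therefore matches the kernels, hence induces `ℤ^m ≃ ℤ^{m'}` and, on the
quotients, `F_n ≃ F_{n'}`; ranks of free abelian groups and of free groups are invariants.
-/

namespace FreeGroup

section Words

variable {α : Type*} [DecidableEq α]

theorem toWord_mk_of_isReduced {L : List (α × Bool)} (h : IsReduced L) : (mk L).toWord = L := by
  rw [toWord_mk, h.reduce_eq]

theorem toWord_mul_of_isReduced_append {x y : FreeGroup α}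
    (h : IsReduced (x.toWord ++ y.toWord)) : (x * y).toWord = x.toWord ++ y.toWord := by
  rw [toWord_mul, h.reduce_eq]

theorem toWord_append_comm_of_commute {x y : FreeGroup α}
    (h : IsReduced (x.toWord ++ y.toWord)) (hxy : Commute x y) :
    x.toWord ++ y.toWord = y.toWord ++ x.toWord := by
  have hsub := toWord_mul_sublist y x
  rw [← hxy.eq, toWord_mul_of_isReduced_append h] at hsub
  exact hsub.eq_of_length (by simp [add_comm])

theorem not_commute_of_isReduced_append {x y : FreeGroup α}
    (h : IsReduced (x.toWord ++ y.toWord)) (hx : x ≠ 1) (hy : y ≠ 1)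
    (hhead : x.toWord.head? ≠ y.toWord.head?) : ¬Commute x y := by
  intro hxy
  have := congrArg List.head? (toWord_append_comm_of_commute h hxy)
  rw [List.head?_append_of_ne_nil _ (mt toWord_eq_nil_iff.mp hx),
    List.head?_append_of_ne_nil _ (mt toWord_eq_nil_iff.mp hy)] at this
  exact hhead this

end Words

theorem exists_not_commute_conj {α : Type*} [Nontrivial α] {w : FreeGroup α} (hw : w ≠ 1) :
    ∃ v, ¬Commute w (v * w * v⁻¹) := by
  classical
  have hL : w.toWord ≠ [] := mt toWord_eq_nil_iff.mp hw
  obtain ⟨f, hf⟩ := Option.ne_none_iff_exists'.mp (mt List.head?_eq_none_iff.mp hL)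
  obtain ⟨l, hl⟩ := Option.ne_none_iff_exists'.mp (mt List.getLast?_eq_none_iff.mp hL)
  have hred : IsReduced w.toWord := isReduced_toWord
  by_cases hlf : l.1 = f.1
  · obtain ⟨b, hb⟩ := exists_ne f.1
    let Z := (b, true) :: (w.toWord ++ [(b, false)])
    have hZ : IsReduced Z := by
      refine List.IsChain.cons (List.IsChain.append hred (List.isChain_singleton _) ?_) ?_
      · simp [hl, hlf, hb.symm]
      · simp [List.head?_append, hf, hb]
    have hz : (of b * w * (of b)⁻¹).toWord = Z := by
      rw [← toWord_mk_of_isReduced hZ, ← mk_toWord (x := w), of, inv_mk, mul_mk, mul_mk]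
      simp [Z, invRev]
    refine ⟨of b, not_commute_of_isReduced_append ?_ hw (conj_eq_one_iff.not.mpr hw) ?_⟩
    · rw [hz]
      exact List.IsChain.append hred hZ (by simp [hl, Z, hlf, hb.symm])
    · simp [hz, hf, Z, Prod.ext_iff, hb.symm]
  · -- as `l.1 ≠ f.1`, conjugating by `l` merely rotates the word
    obtain ⟨L', hL'⟩ := List.getLast?_eq_some_iff.mp hl
    have hL'f : L'.head? = some f := by
      rcases L' with _ | ⟨a, L'⟩
      · simp_all
      · simpa [hL'] using hf
    let Z := l :: L'
    have hZ : IsReduced Z :=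
      List.IsChain.cons (hred.infix ⟨[], [l], by simp [hL']⟩) (by simp [hL'f, hlf])
    have hz : (mk [l] * w * (mk [l])⁻¹).toWord = Z := by
      rw [← toWord_mk_of_isReduced hZ, ← mk_toWord (x := w), hL', ← mul_mk, ← mul_assoc,
        mul_inv_cancel_right, mul_mk]
      rfl
    refine ⟨mk [l], not_commute_of_isReduced_append ?_ hw (conj_eq_one_iff.not.mpr hw) ?_⟩
    · rw [hz]
      exact List.IsChain.append hred hZ (by simp [hl, Z])
    · rw [hz, hf]
      simp [Z, Prod.ext_iff, Ne.symm hlf]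

end FreeGroup

namespace SemidirectProduct

section FreeGroupRight

variable {N α : Type*} [CommGroup N] [Nontrivial α] {φ : FreeGroup α →* MulAut N}

theorem mem_ker_rightHom_iff_forall_commute {g : N ⋊[φ] FreeGroup α} :
    g ∈ (rightHom : N ⋊[φ] FreeGroup α →* FreeGroup α).ker ↔
      ∀ h, Commute g (h * g * h⁻¹) := by
  constructor
  · intro hg h
    obtain ⟨a, rfl⟩ : g ∈ (inl : N →* N ⋊[φ] FreeGroup α).range := by
      rwa [range_inl_eq_ker_rightHom]
    obtain ⟨b, hb⟩ : h * inl a * h⁻¹ ∈ (inl : N →* N ⋊[φ] FreeGroup α).range := by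
      rw [range_inl_eq_ker_rightHom]
      exact Subgroup.Normal.conj_mem inferInstance _ hg h
    rw [← hb]
    exact (Commute.all a b).map inl
  · intro hg
    by_contra hker
    obtain ⟨v, hv⟩ := FreeGroup.exists_not_commute_conj (mt MonoidHom.mem_ker.mpr hker)
    simpa using hv ((hg (inr v)).map rightHom)

theorem map_ker_rightHom {N' α' : Type*} [CommGroup N'] [Nontrivial α']
    {φ' : FreeGroup α' →* MulAut N'} (e : N ⋊[φ] FreeGroup α ≃* N' ⋊[φ'] FreeGroup α') :
    (rightHom : N ⋊[φ] FreeGroup α →* FreeGroup α).ker.map e.toMonoidHom = rightHom.ker := by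
  ext x
  rw [Subgroup.mem_map_equiv, mem_ker_rightHom_iff_forall_commute,
    mem_ker_rightHom_iff_forall_commute]
  exact ⟨fun h k => by simpa using (h (e.symm k)).map e.toMonoidHom,
    fun h k => by simpa using (h (e k)).map e.symm.toMonoidHom⟩

end FreeGroupRight

variable {N₁ N₂ G₁ G₂ : Type*} [Group N₁] [Group N₂] [Group G₁] [Group G₂]
  {φ₁ : G₁ →* MulAut N₁} {φ₂ : G₂ →* MulAut N₂}

noncomputable def inlEquivKerRightHom (N G : Type*) [Group N] [Group G] (φ : G →* MulAut N) :
    N ≃* (rightHom : N ⋊[φ] G →* G).ker :=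
  (MonoidHom.ofInjective inl_injective).trans
    (MulEquiv.subgroupCongr range_inl_eq_ker_rightHom)

noncomputable def leftEquivOfMapKer (e : N₁ ⋊[φ₁] G₁ ≃* N₂ ⋊[φ₂] G₂)
    (he : (rightHom : N₁ ⋊[φ₁] G₁ →* G₁).ker.map e.toMonoidHom = rightHom.ker) : N₁ ≃* N₂ :=
  (inlEquivKerRightHom N₁ G₁ φ₁).trans <| (e.subgroupMap _).trans <|
    (MulEquiv.subgroupCongr he).trans (inlEquivKerRightHom N₂ G₂ φ₂).symm

noncomputable def rightEquivOfMapKer (e : N₁ ⋊[φ₁] G₁ ≃* N₂ ⋊[φ₂] G₂)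
    (he : (rightHom : N₁ ⋊[φ₁] G₁ →* G₁).ker.map e.toMonoidHom = rightHom.ker) : G₁ ≃* G₂ :=
  (QuotientGroup.quotientKerEquivOfSurjective _ rightHom_surjective).symm.trans
    ((QuotientGroup.congr _ _ e he).trans
      (QuotientGroup.quotientKerEquivOfSurjective _ rightHom_surjective))

end SemidirectProduct

theorem iso_ranks_general {n m n' m' : ℕ} (hn : 2 ≤ n)
    (hn' : 2 ≤ n')
    (α : FreeGroup (Fin n) →* Matrix.GeneralLinearGroup (Fin m) ℤ)
    (β : FreeGroup (Fin n') →* Matrix.GeneralLinearGroup (Fin m') ℤ)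
    (h : Nonempty (Gsd α ≃* Gsd β)) :
    n = n' ∧ m = m' := by
  obtain ⟨e⟩ := h
  have : Nontrivial (Fin n) := Fin.nontrivial_iff_two_le.mpr hn
  have : Nontrivial (Fin n') := Fin.nontrivial_iff_two_le.mpr hn'
  have he := map_ker_rightHom e
  constructor
  · simpa using Fintype.card_congr (Equiv.ofFreeGroupEquiv (rightEquivOfMapKer e he))
  · simpa using
      (AddEquiv.toMultiplicative.symm (leftEquivOfMapKer e he)).toIntLinearEquiv.finrank_eq

/-- Isomorphic FABF groups have the same factor ranks. -/
theorem iso_ranks {n m n' m' : ℕ} (hn : 2 ≤ n) (hm : 1 ≤ m)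
    (hn' : 2 ≤ n') (hm' : 1 ≤ m')
    (α : FreeGroup (Fin n) →* Matrix.GeneralLinearGroup (Fin m) ℤ)
    (β : FreeGroup (Fin n') →* Matrix.GeneralLinearGroup (Fin m') ℤ)
    (h : Nonempty (Gsd α ≃* Gsd β)) :
    n = n' ∧ m = m' :=
  iso_ranks_general hn hn' α β h
end

section
/- If the groups G_α and G_β are isomorphic, then: (i) there exists Q ∈ GL_m(ℤ) such that Q⁻¹·(im α)·Q = im β, i.e. the images of α and β are conjugate subgroups of GL_m(ℤ); and (ii) there exists an automorphism φ of F_n such that φ(ker α) = ker β, i.e. the kernels of α and β are mapped to one another by an automorphism of F_n. -/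
open Matrix SemidirectProduct

/-!
The abelian normal subgroup `ℤ^m` of `G_α` is characterised intrinsically: it consists of the
elements whose conjugates pairwise commute. Indeed, in `F_n` with `n ≥ 2` no nontrivial element
has this property: its normal closure would be abelian, hence infinite cyclic `⟨w⟩` with `w ≠ 1`,
so every square `g²` would centralise `w`; but `x₁²` and `x₂²` cannot both commute with `w`, as
one sees from the exponent sum in `x₂`. Hence an isomorphism `G_α ≃* G_β` maps `ℤ^m` onto `ℤ^m`,
via some `P ∈ GL_m(ℤ)`, and induces an automorphism `θ` of the quotient `F_n`, with
`β (θ u) = P · α u · P⁻¹`.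
-/

open Subgroup

theorem FreeGroup.subsingleton_of_isMulCommutative {X : Type*}
    [IsMulCommutative (FreeGroup X)] : Subsingleton X := by
  classical
  refine ⟨fun a b => by_contra fun hab => ?_⟩
  have hc := congrArg (FreeGroup.lift fun x =>
    if x = a then Equiv.swap (0 : Fin 3) 1 else Equiv.swap (1 : Fin 3) 2)
    (mul_comm' (of a) (of b))
  rw [_root_.map_mul, _root_.map_mul, lift_apply_of, lift_apply_of, if_pos rfl,
    if_neg (Ne.symm hab)] at hc
  exact absurd hc (by decide)

theorem IsFreeGroup.isCyclic_of_isMulCommutative_s15 {G : Type*} [Group G] [IsFreeGroup G]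
    [IsMulCommutative G] : IsCyclic G := by
  have : IsMulCommutative (FreeGroup (Generators G)) := .of_comm fun x y =>
    (toFreeGroup G).symm.injective (by simp only [map_mul, mul_comm'])
  have := FreeGroup.subsingleton_of_isMulCommutative (X := Generators G)
  have : IsCyclic (FreeGroup (Generators G)) := by
    cases isEmpty_or_nonempty (Generators G)
    · infer_instance
    · have := uniqueOfSubsingleton (Classical.arbitrary (Generators G))
      infer_instance
  exact isCyclic_of_surjective (mulEquiv G).toMonoidHom (mulEquiv G).surjective

theorem FreeGroup.exists_zpowers_eq_of_isMulCommutative {X : Type*}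
    (H : Subgroup (FreeGroup X)) [IsMulCommutative H] : ∃ c : FreeGroup X, zpowers c = H :=
  H.isCyclic_iff_exists_zpowers_eq_top.1 IsFreeGroup.isCyclic_of_isMulCommutative_s15

theorem FreeGroup.exists_zpow_eq_of_commute {X : Type*} {x y : FreeGroup X} (h : Commute x y) :
    ∃ (c : FreeGroup X) (p q : ℤ), c ^ p = x ∧ c ^ q = y := by
  have : IsMulCommutative (closure {x, y}) := isMulCommutative_closure <| by
    simp only [Set.mem_insert_iff, Set.mem_singleton_iff]
    rintro a (rfl | rfl) b (rfl | rfl) <;> first | rfl | exact h | exact h.symm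
  obtain ⟨c, hc⟩ := exists_zpowers_eq_of_isMulCommutative (closure {x, y})
  obtain ⟨p, hp⟩ := mem_zpowers_iff.1 (hc ▸ subset_closure (by simp) : x ∈ zpowers c)
  obtain ⟨q, hq⟩ := mem_zpowers_iff.1 (hc ▸ subset_closure (by simp) : y ∈ zpowers c)
  exact ⟨c, p, q, hp, hq⟩

theorem FreeGroup.map_eq_one_of_commute {X H : Type*} [Group H] [IsMulTorsionFree H]
    (χ : FreeGroup X →* H) {a w : FreeGroup X} (hw : w ≠ 1) (h : Commute a w)
    (hχ : χ w = 1) : χ a = 1 := by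
  obtain ⟨c, p, q, rfl, rfl⟩ := exists_zpow_eq_of_commute h
  have hq : q ≠ 0 := by rintro rfl; exact hw (zpow_zero c)
  rw [map_zpow, IsMulTorsionFree.zpow_eq_one_iff_left hq] at hχ
  rw [map_zpow, hχ, _root_.one_zpow]

theorem commute_sq_of_zpowers_normal {G : Type*} [Group G] {w : G} (hw : ¬IsOfFinOrder w)
    (hN : (zpowers w).Normal) (g : G) : Commute (g ^ 2) w := by
  have hinj := injective_zpow_iff_not_isOfFinOrder.2 hw
  -- conjugation by `g` restricts to an automorphism `w ↦ w ^ k` of `⟨w⟩ ≅ ℤ`, so `k = ±1`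
  obtain ⟨k, hk⟩ := mem_zpowers_iff.1 (hN.conj_mem w (mem_zpowers w) g)
  obtain ⟨l, hl⟩ := mem_zpowers_iff.1 (hN.conj_mem w (mem_zpowers w) g⁻¹)
  rw [← MulAut.conj_apply] at hk hl
  have hlk : l * k = 1 := hinj <| by
    simp only [_root_.zpow_mul, hl, ← map_zpow, hk, zpow_one, map_inv, MulAut.inv_apply,
      MulEquiv.symm_apply_apply]
  have hkk : k * k = 1 := by
    rcases Int.eq_one_or_neg_one_of_mul_eq_one' hlk with ⟨-, rfl⟩ | ⟨-, rfl⟩ <;> rfl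
  have hconj : MulAut.conj (g ^ 2) w = w := by
    rw [map_pow, pow_two, MulAut.mul_apply, ← hk, map_zpow, ← hk, ← _root_.zpow_mul, hkk,
      zpow_one]
  rw [MulAut.conj_apply, mul_inv_eq_iff_eq_mul] at hconj
  exact hconj

def HasCommutingConjugates {G : Type*} [Group G] (g : G) : Prop :=
  ∀ v w : G, Commute (v * g * v⁻¹) (w * g * w⁻¹)

theorem HasCommutingConjugates.map {G H : Type*} [Group G] [Group H] {g : G}
    (hg : HasCommutingConjugates g) (f : G →* H) (hf : Function.Surjective f) :
    HasCommutingConjugates (f g) := by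
  intro v w
  obtain ⟨v, rfl⟩ := hf v
  obtain ⟨w, rfl⟩ := hf w
  simpa only [map_mul, map_inv] using (hg v w).map f

theorem MulEquiv.hasCommutingConjugates_apply_iff {G H : Type*} [Group G] [Group H]
    (e : G ≃* H) {g : G} : HasCommutingConjugates (e g) ↔ HasCommutingConjugates g :=
  ⟨fun h => by simpa using h.map e.symm.toMonoidHom e.symm.surjective,
    fun h => h.map e.toMonoidHom e.surjective⟩

theorem FreeGroup.eq_one_of_hasCommutingConjugates {X : Type*} [Nontrivial X]
    {u : FreeGroup X} (hu : HasCommutingConjugates u) : u = 1 := by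
  classical
  by_contra hu1
  have : IsMulCommutative (normalClosure {u}) := isMulCommutative_closure <| by
    simp only [Group.mem_conjugatesOfSet_iff, Set.mem_singleton_iff, exists_eq_left,
      isConj_iff]
    rintro _ ⟨v, rfl⟩ _ ⟨w, rfl⟩
    exact hu v w
  obtain ⟨w, hw⟩ := exists_zpowers_eq_of_isMulCommutative (normalClosure {u})
  have hw1 : w ≠ 1 := by
    rintro rfl
    rw [zpowers_one_eq_bot] at hw
    exact hu1 (normalClosure_eq_bot_iff.1 hw.symm rfl)
  have hsq := commute_sq_of_zpowers_normal (not_isOfFinOrder_of_isMulTorsionFree hw1)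
    (hw ▸ normalClosure_normal)
  obtain ⟨i, j, hij⟩ := exists_pair_ne X
  let χ : FreeGroup X →* Multiplicative ℤ :=
    lift fun x => if x = j then Multiplicative.ofAdd 1 else 1
  have hχi : χ (of i ^ 2) = 1 := by simp [χ, hij]
  have hχj : χ (of j ^ 2) ≠ 1 := by simp [χ]
  have hχw : χ w = 1 :=
    map_eq_one_of_commute χ (sq_eq_one.not.2 (of_ne_one i)) (hsq (of i)).symm hχi
  exact hχj (map_eq_one_of_commute χ hw1 (hsq (of j)) hχw)

namespace SemidirectProduct

section

variable {N G : Type*} [Group N] [Group G] {φ : G →* MulAut N}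

theorem inl_left_of_rightHom_eq_one {x : N ⋊[φ] G} (hx : rightHom x = 1) :
    inl x.left = x := by
  conv_rhs => rw [← inl_left_mul_inr_right x]
  rw [show x.right = 1 from hx, map_one, mul_one]

theorem rightHom_eq_one_iff_hasCommutingConjugates [IsMulCommutative N]
    (hG : ∀ u : G, HasCommutingConjugates u → u = 1) (g : N ⋊[φ] G) :
    rightHom g = 1 ↔ HasCommutingConjugates g := by
  refine ⟨fun hg v w => ?_, fun hg => hG _ (hg.map rightHom rightHom_surjective)⟩
  have hconj : ∀ x : N ⋊[φ] G, inl (x * g * x⁻¹).left = x * g * x⁻¹ := fun x =>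
    inl_left_of_rightHom_eq_one <| by
      rw [map_mul, map_mul, hg, mul_one, map_inv, mul_inv_cancel]
  rw [← hconj v, ← hconj w, Commute, SemiconjBy, ← map_mul, ← map_mul, mul_comm']

end

theorem rightHom_apply_eq_one_iff {N₁ G₁ N₂ G₂ : Type*} [Group N₁] [Group G₁] [Group N₂]
    [Group G₂] [IsMulCommutative N₁] [IsMulCommutative N₂]
    {φ₁ : G₁ →* MulAut N₁} {φ₂ : G₂ →* MulAut N₂}
    (hG₁ : ∀ u : G₁, HasCommutingConjugates u → u = 1)
    (hG₂ : ∀ u : G₂, HasCommutingConjugates u → u = 1)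
    (e : N₁ ⋊[φ₁] G₁ ≃* N₂ ⋊[φ₂] G₂) (g : N₁ ⋊[φ₁] G₁) :
    rightHom (e g) = 1 ↔ rightHom g = 1 := by
  rw [rightHom_eq_one_iff_hasCommutingConjugates hG₂,
    rightHom_eq_one_iff_hasCommutingConjugates hG₁, e.hasCommutingConjugates_apply_iff]

section

variable {N₁ G₁ N₂ G₂ : Type*} [Group N₁] [Group G₁] [Group N₂] [Group G₂]
  {φ₁ : G₁ →* MulAut N₁} {φ₂ : G₂ →* MulAut N₂} (e : N₁ ⋊[φ₁] G₁ ≃* N₂ ⋊[φ₂] G₂)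
  (he : ∀ g, rightHom (e g) = 1 ↔ rightHom g = 1)
include he

theorem rightHom_symm_apply_eq_one_iff (g : N₂ ⋊[φ₂] G₂) :
    rightHom (e.symm g) = 1 ↔ rightHom g = 1 := by
  simpa using (he (e.symm g)).symm

theorem rightHom_apply_eq (g : N₁ ⋊[φ₁] G₁) :
    rightHom (e g) = rightHom (e (inr (rightHom g))) := by
  conv_lhs => rw [← inl_left_mul_inr_right g]
  rw [map_mul, map_mul, (he _).2 (rightHom_inl _), one_mul]
  rfl

theorem inl_left_apply_inl (a : N₁) : inl (e (inl a)).left = e (inl a) :=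
  inl_left_of_rightHom_eq_one ((he _).2 (rightHom_inl a))

def rightEquiv : G₁ ≃* G₂ where
  toFun u := rightHom (e (inr u))
  invFun v := rightHom (e.symm (inr v))
  left_inv u := by
    dsimp only
    rw [← rightHom_apply_eq e.symm (rightHom_symm_apply_eq_one_iff e he), e.symm_apply_apply,
      rightHom_inr]
  right_inv v := by
    dsimp only
    rw [← rightHom_apply_eq e he, e.apply_symm_apply, rightHom_inr]
  map_mul' u v := by simp only [map_mul]

def leftEquiv : N₁ ≃* N₂ where
  toFun a := (e (inl a)).left
  invFun b := (e.symm (inl b)).left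
  left_inv a := by
    dsimp only
    rw [inl_left_apply_inl e he, e.symm_apply_apply, left_inl]
  right_inv b := by
    dsimp only
    rw [inl_left_apply_inl e.symm (rightHom_symm_apply_eq_one_iff e he), e.apply_symm_apply,
      left_inl]
  map_mul' a b := by
    rw [← inl_inj (φ := φ₂), inl_left_apply_inl e he, map_mul, map_mul, map_mul,
      inl_left_apply_inl e he, inl_left_apply_inl e he]

theorem inl_leftEquiv (a : N₁) : inl (leftEquiv e he a) = e (inl a) :=
  inl_left_apply_inl e he a

theorem leftEquiv_aut [IsMulCommutative N₂] (u : G₁) (a : N₁) :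
    leftEquiv e he (φ₁ u a) = φ₂ (rightEquiv e he u) (leftEquiv e he a) := by
  set c := (e (inr u)).left
  have hdec : e (inr u) = inl c * inr (rightEquiv e he u) := (inl_left_mul_inr_right _).symm
  rw [← inl_inj (φ := φ₂)]
  calc inl (leftEquiv e he (φ₁ u a))
      = e (inr u) * inl (leftEquiv e he a) * (e (inr u))⁻¹ := by
        rw [inl_leftEquiv, inl_aut, map_mul, map_mul, map_inv, map_inv, inl_leftEquiv]
    _ = inl c * inl (φ₂ (rightEquiv e he u) (leftEquiv e he a)) * (inl c)⁻¹ := by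
        rw [hdec, inl_aut, map_inv]; group
    _ = inl (φ₂ (rightEquiv e he u) (leftEquiv e he a)) := by
        rw [← map_inv, ← map_mul, ← map_mul, mul_comm' c, mul_assoc, mul_inv_cancel, mul_one]

end

end SemidirectProduct

theorem rowAction_injective (m : ℕ) : Function.Injective (rowAction m) := by
  intro P P' h
  rw [← _root_.inv_inj, Units.ext_iff, ext_iff_vecMul]
  exact fun a => congrArg Multiplicative.toAdd (DFunLike.congr_fun h (Multiplicative.ofAdd a))

theorem rowAction_surjective (m : ℕ) : Function.Surjective (rowAction m) := by
  intro ψ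
  -- `rowAction m M` is `a ↦ a ᵥ* M⁻¹ = (M⁻¹)ᵀ *ᵥ a`, so `M⁻¹` is the transposed matrix of `ψ`
  let f : (Fin m → ℤ) ≃ₗ[ℤ] (Fin m → ℤ) := (AddEquiv.toMultiplicative.symm ψ).toIntLinearEquiv
  have hf : ∀ g : (Fin m → ℤ) ≃ₗ[ℤ] (Fin m → ℤ),
      (LinearMap.toMatrix' g.symm.toLinearMap)ᵀ * (LinearMap.toMatrix' g.toLinearMap)ᵀ = 1 := by
    intro g
    rw [← transpose_mul, ← LinearMap.toMatrix'_comp, LinearEquiv.comp_coe,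
      LinearEquiv.symm_trans_self, LinearEquiv.refl_toLinearMap, LinearMap.toMatrix'_id,
      transpose_one]
  refine ⟨⟨_, _, hf f, by simpa using hf f.symm⟩, MulEquiv.ext fun a => ?_⟩
  show Multiplicative.ofAdd (Multiplicative.toAdd a ᵥ* (LinearMap.toMatrix' f.toLinearMap)ᵀ) = ψ a
  rw [vecMul_transpose, LinearMap.toMatrix'_mulVec]
  rfl

theorem MonoidHom.mem_range_iff_of_comp_eq {F F' H H' : Type*} [Group F] [Group F'] [Group H]
    [Group H'] {α : F →* H} {β : F' →* H'} (θ : F ≃* F') {ι : H →* H'}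
    (hι : Function.Injective ι) (h : ∀ u, β (θ u) = ι (α u)) (M : H) :
    M ∈ α.range ↔ ι M ∈ β.range := by
  constructor
  · rintro ⟨u, rfl⟩
    exact ⟨θ u, h u⟩
  · rintro ⟨v, hv⟩
    exact ⟨θ.symm v, hι (by rw [← h, θ.apply_symm_apply, hv])⟩

theorem MonoidHom.map_ker_of_comp_eq {F F' H H' : Type*} [Group F] [Group F'] [Group H]
    [Group H'] {α : F →* H} {β : F' →* H'} (θ : F ≃* F') {ι : H →* H'}
    (hι : Function.Injective ι) (h : ∀ u, β (θ u) = ι (α u)) :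
    α.ker.map θ.toMonoidHom = β.ker := by
  ext v
  rw [mem_map_equiv, mem_ker, mem_ker, ← hι.eq_iff, map_one, ← h, θ.apply_symm_apply]

theorem iso_necessary_general {n m : ℕ} (hn : 2 ≤ n)
    (α β : FreeGroup (Fin n) →* Matrix.GeneralLinearGroup (Fin m) ℤ)
    (h : Nonempty (Gsd α ≃* Gsd β)) :
    (∃ Q : Matrix.GeneralLinearGroup (Fin m) ℤ,
        ∀ M : Matrix.GeneralLinearGroup (Fin m) ℤ,
          M ∈ α.range ↔ Q⁻¹ * M * Q ∈ β.range) ∧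
    (∃ φ : FreeGroup (Fin n) ≃* FreeGroup (Fin n),
        Subgroup.map φ.toMonoidHom α.ker = β.ker) := by
  obtain ⟨e⟩ := h
  have : Nontrivial (Fin n) := Fin.nontrivial_iff_two_le.2 hn
  have he := rightHom_apply_eq_one_iff (fun _ => FreeGroup.eq_one_of_hasCommutingConjugates)
    (fun _ => FreeGroup.eq_one_of_hasCommutingConjugates) e
  set θ := rightEquiv e he
  obtain ⟨P, hP⟩ := rowAction_surjective m (leftEquiv e he)
  have hconj : ∀ u, β (θ u) = (MulAut.conj P).toMonoidHom (α u) := by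
    intro u
    have hψ : rowAction m (β (θ u)) * leftEquiv e he = leftEquiv e he * rowAction m (α u) :=
      MulEquiv.ext fun a => (leftEquiv_aut e he u a).symm
    apply rowAction_injective m
    rw [MulEquiv.coe_toMonoidHom, MulAut.conj_apply, map_mul, map_mul, map_inv, hP, ← hψ,
      mul_inv_cancel_right]
  refine ⟨⟨P⁻¹, fun M => ?_⟩, θ, MonoidHom.map_ker_of_comp_eq θ (MulAut.conj P).injective hconj⟩
  rw [inv_inv, ← MulAut.conj_apply, ← MulEquiv.coe_toMonoidHom]
  exact MonoidHom.mem_range_iff_of_comp_eq θ (MulAut.conj P).injective hconj M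

/-- If `G_α ≅ G_β` then the images of `α` and `β` are conjugate in `GL_m(ℤ)` and their
kernels are related by an automorphism of `F_n`. -/
theorem iso_necessary {n m : ℕ} (hn : 2 ≤ n) (hm : 1 ≤ m)
    (α β : FreeGroup (Fin n) →* Matrix.GeneralLinearGroup (Fin m) ℤ)
    (h : Nonempty (Gsd α ≃* Gsd β)) :
    (∃ Q : Matrix.GeneralLinearGroup (Fin m) ℤ,
        ∀ M : Matrix.GeneralLinearGroup (Fin m) ℤ,
          M ∈ α.range ↔ Q⁻¹ * M * Q ∈ β.range) ∧
    (∃ φ : FreeGroup (Fin n) ≃* FreeGroup (Fin n),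
        Subgroup.map φ.toMonoidHom α.ker = β.ker) :=
  iso_necessary_general hn α β h
end

section
/- Let G be a group, ψ : G → G a group endomorphism, and x, y ∈ G. Then: (i) there exists a natural number p (the conjugacy ψ-period of y) such that {k ∈ ℕ | ψ^k(y) is conjugate to y in G} = {p·t : t ∈ ℕ}; and (ii) if the set {k ∈ ℕ | ψ^k(x) is conjugate to y in G} is nonempty, then it equals {k₀ + p·t : t ∈ ℕ}, where k₀ is its minimum and p is the conjugacy ψ-period of y. -/
/-- There is `p ∈ ℕ` (the conjugacy `ψ`-period of `y`) with
`{k | ψ^k(y) ∼ y} = pℕ`, and if `{k | ψ^k(x) ∼ y}` is nonempty then it equals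
`k₀ + pℕ` where `k₀` is its minimum. -/
theorem conj_philog_structure {G : Type*} [Group G] (ψ : Monoid.End G) (x y : G) :
    ∃ p : ℕ,
      ({k : ℕ | IsConj ((ψ ^ k) y) y} = Set.range fun t : ℕ => p * t) ∧
      ({k : ℕ | IsConj ((ψ ^ k) x) y}.Nonempty →
        {k : ℕ | IsConj ((ψ ^ k) x) y}
          = Set.range fun t : ℕ => sInf {k : ℕ | IsConj ((ψ ^ k) x) y} + p * t) := by
  classical
  set S : Set ℕ := {k : ℕ | IsConj ((ψ ^ k) y) y} with hSdef
  have hcomp : ∀ a b : ℕ, ∀ g : G, (ψ ^ (a + b)) g = (ψ ^ a) ((ψ ^ b) g) := by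
    intro a b g
    rw [pow_add]
    rfl
  have h0 : (0 : ℕ) ∈ S := by
    simp only [hSdef, Set.mem_setOf_eq, pow_zero]
    exact isConj_iff.mpr ⟨1, by simp⟩
  have hadd : ∀ a b : ℕ, a ∈ S → b ∈ S → a + b ∈ S := by
    intro a b ha hb
    have h1 : IsConj ((ψ ^ a) ((ψ ^ b) y)) ((ψ ^ a) y) := MonoidHom.map_isConj (ψ ^ a) hb
    have h2 : (ψ ^ (a + b)) y = (ψ ^ a) ((ψ ^ b) y) := hcomp a b y
    exact (h2 ▸ h1.trans ha : IsConj ((ψ ^ (a + b)) y) y)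
  have hsub : ∀ a b : ℕ, a ∈ S → b ∈ S → b ≤ a → a - b ∈ S := by
    intro a b ha hb hle
    have h1 : (ψ ^ a) y = (ψ ^ (a - b)) ((ψ ^ b) y) := by
      rw [← hcomp, Nat.sub_add_cancel hle]
    have h2 : IsConj ((ψ ^ (a - b)) ((ψ ^ b) y)) ((ψ ^ (a - b)) y) := MonoidHom.map_isConj _ hb
    exact h2.symm.trans (h1 ▸ ha)
  -- define p
  by_cases hpos : ∃ k : ℕ, 0 < k ∧ k ∈ S
  case neg =>
    -- S = {0}, take p = 0
    refine ⟨0, ?_, ?_⟩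
    · ext k
      simp only [Set.mem_range, zero_mul]
      constructor
      · intro hk
        by_contra h
        exact hpos ⟨k, Nat.pos_of_ne_zero (fun h0' => h ⟨0, h0'.symm⟩), hk⟩
      · rintro ⟨t, rfl⟩; exact h0
    · intro hne
      set T : Set ℕ := {k : ℕ | IsConj ((ψ ^ k) x) y} with hTdef
      have hk0 : sInf T ∈ T := Nat.sInf_mem hne
      ext k
      simp only [Set.mem_range, zero_mul, add_zero]
      constructor
      · intro hk
        refine ⟨0, ?_⟩
        have hle : sInf T ≤ k := Nat.sInf_le hk
        -- k - sInf T ∈ S, hence = 0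
        have hmem : k - sInf T ∈ S := by
          have h1 : (ψ ^ k) x = (ψ ^ (k - sInf T)) ((ψ ^ sInf T) x) := by
            rw [← hcomp, Nat.sub_add_cancel hle]
          have h2 : IsConj ((ψ ^ (k - sInf T)) ((ψ ^ sInf T) x))
              ((ψ ^ (k - sInf T)) y) := MonoidHom.map_isConj _ hk0
          exact h2.symm.trans (h1 ▸ hk)
        have : k - sInf T = 0 := by
          by_contra h
          exact hpos ⟨k - sInf T, Nat.pos_of_ne_zero h, hmem⟩
        omega
      · rintro ⟨t, rfl⟩; exact hk0
  case pos =>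
    set p : ℕ := sInf {k : ℕ | 0 < k ∧ k ∈ S} with hpdef
    have hpmem : 0 < p ∧ p ∈ S := Nat.sInf_mem hpos
    -- multiples of p are in S
    have hmul : ∀ t : ℕ, p * t ∈ S := by
      intro t
      induction t with
      | zero => simpa using h0
      | succ n ih =>
        have := hadd _ _ ih hpmem.2
        simpa [Nat.mul_succ] using this
    -- elements of S are multiples of p
    have hdvd : ∀ k ∈ S, ∃ t, k = p * t := by
      intro k hk
      have hmod : k % p ∈ S := by
        have h1 : p * (k / p) ≤ k := Nat.mul_div_le k p
        have h2 : k - p * (k / p) ∈ S := hsub _ _ hk (hmul _) h1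
        have h3 := Nat.mod_add_div k p
        have : k % p = k - p * (k / p) := by omega
        rwa [this]
      have : k % p = 0 := by
        by_contra h
        have hlt : k % p < p := Nat.mod_lt _ hpmem.1
        have hin : k % p ∈ {k : ℕ | 0 < k ∧ k ∈ S} :=
          Set.mem_setOf_eq ▸ ⟨Nat.pos_of_ne_zero h, hmod⟩
        have := Nat.sInf_le hin
        omega
      have h4 := Nat.mod_add_div k p
      exact ⟨k / p, by omega⟩
    have hSeq : S = Set.range fun t : ℕ => p * t := by
      ext k
      simp only [Set.mem_range]
      constructor
      · intro hk; obtain ⟨t, ht⟩ := hdvd k hk; exact ⟨t, ht.symm⟩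
      · rintro ⟨t, rfl⟩; exact hmul t
    refine ⟨p, hSeq, ?_⟩
    intro hne
    set T : Set ℕ := {k : ℕ | IsConj ((ψ ^ k) x) y} with hTdef
    have hk0 : sInf T ∈ T := Nat.sInf_mem hne
    ext k
    simp only [Set.mem_range]
    constructor
    · intro hk
      have hle : sInf T ≤ k := Nat.sInf_le hk
      have hmem : k - sInf T ∈ S := by
        have h1 : (ψ ^ k) x = (ψ ^ (k - sInf T)) ((ψ ^ sInf T) x) := by
          rw [← hcomp, Nat.sub_add_cancel hle]
        have h2 : IsConj ((ψ ^ (k - sInf T)) ((ψ ^ sInf T) x))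
            ((ψ ^ (k - sInf T)) y) := MonoidHom.map_isConj _ hk0
        exact h2.symm.trans (h1 ▸ hk)
      obtain ⟨t, ht⟩ := hdvd _ hmem
      exact ⟨t, by omega⟩
    · rintro ⟨t, rfl⟩
      have h1 : (ψ ^ (sInf T + p * t)) x = (ψ ^ (p * t)) ((ψ ^ sInf T) x) := by
        rw [add_comm]; exact hcomp _ _ x
      have h2 : IsConj ((ψ ^ (p * t)) ((ψ ^ sInf T) x)) ((ψ ^ (p * t)) y) :=
        MonoidHom.map_isConj _ hk0
      show IsConj ((ψ ^ (sInf T + p * t)) x) y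
      rw [h1]
      exact h2.trans (hmul t)
end

section
/- Let Φ be a type I endomorphism of G_α, with associated matrix Q and homomorphism φ, and let u ∈ F_n and k, p ∈ ℕ be such that φ^{k+p}(u) = φ^k(u). Define the affine transformation Θ : ℤ^m → ℤ^m by x ↦ x·Q^p + τ(Φ^p(φ^k(u))), where φ^k(u) ∈ F_n is regarded as an element of G_α. Then for every integer λ ≥ 1 and every a ∈ ℤ^m, τ(Φ^{k+λp}(u·t^a)) = Θ^λ(τ(Φ^k(u·t^a))). -/
/-!
Writing `g = v · tᵇ`, a type I endomorphism satisfies `τ(Φ^j g) = τ(Φ^j v) + b·Q^j`, and the free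
part of `Φ^j g` is `φ^j v`. After `k` steps the free part of the orbit of `u · tᵃ` is `φ^k(u)`, a
point of `φ`-period `p`, so every further block of `p` steps acts on `τ` by the same affine map `Θ`.
-/

open Matrix SemidirectProduct

namespace Gsd

variable {n m : ℕ} {α : FreeGroup (Fin n) →* Matrix.GeneralLinearGroup (Fin m) ℤ}

@[simp]
lemma right_fE_mul_tA (v : FreeGroup (Fin n)) (a : Fin m → ℤ) : (fE α v * tA α a).right = v := by
  simp [fE, tA]

lemma tau_mul_tA (g : Gsd α) (d : Fin m → ℤ) : tau α (g * tA α d) = tau α g + d := by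
  rw [tau, tA, mul_left, mul_right, left_inl, right_inl]
  simp [tau, rowAction, Matrix.add_vecMul, Matrix.vecMul_vecMul]

lemma fE_right_mul_tA_tau (g : Gsd α) : fE α g.right * tA α (tau α g) = g := by
  ext
  · rw [fE, tA, mul_left, left_inr, right_inr, left_inl]
    simp [tau, rowAction, Matrix.vecMul_vecMul]
  · simp [fE, tA]

lemma tau_map_of_map_tA {Ψ : Monoid.End (Gsd α)} {M : Matrix (Fin m) (Fin m) ℤ}
    (hM : ∀ a, Ψ (tA α a) = tA α (Matrix.vecMul a M)) (g : Gsd α) :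
    tau α (Ψ g) = tau α (Ψ (fE α g.right)) + Matrix.vecMul (tau α g) M := by
  conv_lhs => rw [← fE_right_mul_tA_tau g]
  rw [map_mul, hM, tau_mul_tA]

variable {Φ : Monoid.End (Gsd α)}

lemma pow_apply_tA {Q : Matrix (Fin m) (Fin m) ℤ}
    (hQ : ∀ a, Φ (tA α a) = tA α (Matrix.vecMul a Q)) (j : ℕ) (a : Fin m → ℤ) :
    (Φ ^ j) (tA α a) = tA α (Matrix.vecMul a (Q ^ j)) := by
  induction j generalizing a with
  | zero => simp
  | succ j ih =>
    rw [Monoid.End.coe_pow, Function.iterate_succ_apply', ← Monoid.End.coe_pow, ih, hQ,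
      Matrix.vecMul_vecMul, pow_succ]

lemma semiconj_rightHom {Q : Matrix (Fin m) (Fin m) ℤ}
    (hQ : ∀ a, Φ (tA α a) = tA α (Matrix.vecMul a Q)) {φ : Monoid.End (FreeGroup (Fin n))}
    (hφ : ∀ u, rightHom (Φ (fE α u)) = φ u) :
    Function.Semiconj rightHom Φ φ := fun g => by
  conv_lhs => rw [← fE_right_mul_tA_tau g]
  rw [map_mul, map_mul, hQ, hφ]
  simp [tA]

lemma right_pow_apply {Q : Matrix (Fin m) (Fin m) ℤ}
    (hQ : ∀ a, Φ (tA α a) = tA α (Matrix.vecMul a Q)) {φ : Monoid.End (FreeGroup (Fin n))}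
    (hφ : ∀ u, rightHom (Φ (fE α u)) = φ u) (j : ℕ) (g : Gsd α) :
    ((Φ ^ j) g).right = (φ ^ j) g.right := by
  simpa [Monoid.End.coe_pow] using (semiconj_rightHom hQ hφ).iterate_right j g

end Gsd

open Gsd

theorem periodic_affine_general {n m : ℕ}
    (α : FreeGroup (Fin n) →* Matrix.GeneralLinearGroup (Fin m) ℤ)
    (Φ : Monoid.End (Gsd α)) (Q : Matrix (Fin m) (Fin m) ℤ)
    (hQ : ∀ a : Fin m → ℤ, Φ (tA α a) = tA α (Matrix.vecMul a Q))
    (φ : Monoid.End (FreeGroup (Fin n)))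
    (hφ : ∀ u : FreeGroup (Fin n), SemidirectProduct.rightHom (Φ (fE α u)) = φ u)
    (u : FreeGroup (Fin n)) (k p : ℕ)
    (h : (φ ^ (k + p)) u = (φ ^ k) u)
    (Θ : (Fin m → ℤ) → (Fin m → ℤ))
    (hΘ : ∀ x : Fin m → ℤ,
      Θ x = Matrix.vecMul x (Q ^ p) + tau α ((Φ ^ p) (fE α ((φ ^ k) u))))
    (lam : ℕ) (a : Fin m → ℤ) :
    tau α ((Φ ^ (k + lam * p)) (fE α u * tA α a))
      = Θ^[lam] (tau α ((Φ ^ k) (fE α u * tA α a))) := by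
  have hperiodic : Function.IsPeriodicPt φ p ((φ ^ k) u) := by
    simpa [Function.IsPeriodicPt, Function.IsFixedPt, Monoid.End.coe_pow,
      ← Function.iterate_add_apply, add_comm p] using h
  induction lam with
  | zero => simp
  | succ lam ih =>
    have hright : ((Φ ^ (k + lam * p)) (fE α u * tA α a)).right = (φ ^ k) u := by
      rw [right_pow_apply hQ hφ, right_fE_mul_tA, add_comm, pow_add, Monoid.End.coe_mul,
        Function.comp_apply]
      simpa [Monoid.End.coe_pow] using (hperiodic.const_mul lam).eq
    rw [show k + (lam + 1) * p = p + (k + lam * p) by ring, pow_add, Monoid.End.coe_mul,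
      Function.comp_apply, tau_map_of_map_tA (pow_apply_tA hQ p), hright, ih,
      Function.iterate_succ_apply', hΘ, add_comm]

/-- If `φ^(k+p)(u) = φ^k(u)` then for each `λ ≥ 1` and `a`,
`τ(Φ^(k+λp)(u·tᵃ)) = Θ^λ(τ(Φ^k(u·tᵃ)))`, where `Θ(x) = x·Q^p + τ(Φ^p(φ^k(u)))`. -/
theorem periodic_affine {n m : ℕ} (hn : 2 ≤ n) (hm : 1 ≤ m)
    (α : FreeGroup (Fin n) →* Matrix.GeneralLinearGroup (Fin m) ℤ)
    (Φ : Monoid.End (Gsd α)) (Q : Matrix (Fin m) (Fin m) ℤ)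
    (hQ : ∀ a : Fin m → ℤ, Φ (tA α a) = tA α (Matrix.vecMul a Q))
    (φ : Monoid.End (FreeGroup (Fin n)))
    (hφ : ∀ u : FreeGroup (Fin n), SemidirectProduct.rightHom (Φ (fE α u)) = φ u)
    (u : FreeGroup (Fin n)) (k p : ℕ)
    (h : (φ ^ (k + p)) u = (φ ^ k) u)
    (Θ : (Fin m → ℤ) → (Fin m → ℤ))
    (hΘ : ∀ x : Fin m → ℤ,
      Θ x = Matrix.vecMul x (Q ^ p) + tau α ((Φ ^ p) (fE α ((φ ^ k) u))))
    (lam : ℕ) (hlam : 1 ≤ lam) (a : Fin m → ℤ) :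
    tau α ((Φ ^ (k + lam * p)) (fE α u * tA α a))
      = Θ^[lam] (tau α ((Φ ^ k) (fE α u * tA α a))) :=
  periodic_affine_general α Φ Q hQ φ hφ u k p h Θ hΘ lam a
end
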